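/- For the one-dimensional Hamiltonian system with H(x,p) = x²/(2k) + p²/(2m), integration time T = (π/2)√(km), and p₀ ∼ N(0,m) independent of x₀, the conditional distribution of x(T) given x₀ equals N(0,k), i.e. the proposal samples exactly from the target distribution N(0,k) independently of the starting point. -/

import Mathlib

/-!
Hamilton's equations `x' = p / m`, `p' = -x / k` describe a harmonic oscillator of angular
frequency `ω = 1 / √(k m)`. Conservation of `H` forces the solution with zero initial data to
vanish, so by linearity the flow is `x(t) = x₀ cos ωt + p₀ / (m ω) sin ωt`. At `T = π / (2ω)`
this is the linear map `p₀ ↦ p₀ / (m ω)`, which sends `N(0, m)` to `N(0, m / (m ω)²) = N(0, k)`.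
-/

open MeasureTheory ProbabilityTheory Real

namespace HarmonicOscillator

variable {k m : ℝ} {X P : ℝ → ℝ}

theorem hamiltonian_eq_initial (hX : ∀ t, HasDerivAt X (P t / m) t)
    (hP : ∀ t, HasDerivAt P (-(X t) / k) t) (t : ℝ) :
    X t ^ 2 / k + P t ^ 2 / m = X 0 ^ 2 / k + P 0 ^ 2 / m := by
  have hH : ∀ t, HasDerivAt (fun t ↦ X t ^ 2 / k + P t ^ 2 / m) 0 t := fun t ↦
    ((((hX t).pow 2).div_const k).add (((hP t).pow 2).div_const m)).congr_deriv (by ring)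
  exact is_const_of_deriv_eq_zero (fun t ↦ (hH t).differentiableAt) (fun t ↦ (hH t).deriv) t 0

theorem eq_zero_of_initial_eq_zero (hk : 0 < k) (hm : 0 < m)
    (hX : ∀ t, HasDerivAt X (P t / m) t) (hP : ∀ t, HasDerivAt P (-(X t) / k) t)
    (hX0 : X 0 = 0) (hP0 : P 0 = 0) (t : ℝ) : X t = 0 := by
  have hH := hamiltonian_eq_initial hX hP t
  simp only [hX0, hP0, zero_pow two_ne_zero, zero_div, add_zero] at hH
  have hXk : X t ^ 2 / k = 0 := by
    linarith [div_nonneg (sq_nonneg (P t)) hm.le, div_nonneg (sq_nonneg (X t)) hk.le]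
  simpa [hk.ne'] using hXk

theorem hasDerivAt_cos_add_sin {ω : ℝ} (hω : k * m * ω ^ 2 = 1) (x₀ p₀ t : ℝ) :
    HasDerivAt (fun t ↦ x₀ * cos (ω * t) + p₀ / (m * ω) * sin (ω * t))
      ((-(m * ω * x₀) * sin (ω * t) + p₀ * cos (ω * t)) / m) t ∧
    HasDerivAt (fun t ↦ -(m * ω * x₀) * sin (ω * t) + p₀ * cos (ω * t))
      (-(x₀ * cos (ω * t) + p₀ / (m * ω) * sin (ω * t)) / k) t := by
  have hm : m ≠ 0 := by rintro rfl; simp at hω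
  have hω0 : ω ≠ 0 := by rintro rfl; simp at hω
  have hωt : HasDerivAt (ω * ·) ω t := by simpa using (hasDerivAt_id t).const_mul ω
  constructor
  · refine ((hωt.cos.const_mul x₀).add (hωt.sin.const_mul _)).congr_deriv ?_
    field_simp
  · refine ((hωt.sin.const_mul _).add (hωt.cos.const_mul p₀)).congr_deriv ?_
    have hk_inv : k⁻¹ = m * ω ^ 2 := by rw [inv_eq_of_mul_eq_one_right]; linear_combination hω
    rw [div_eq_mul_inv, hk_inv]
    field_simp
    ring

theorem eq_cos_add_sin (hk : 0 < k) (hm : 0 < m) {ω : ℝ} (hω : k * m * ω ^ 2 = 1)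
    (hX : ∀ t, HasDerivAt X (P t / m) t) (hP : ∀ t, HasDerivAt P (-(X t) / k) t) (t : ℝ) :
    X t = X 0 * cos (ω * t) + P 0 / (m * ω) * sin (ω * t) := by
  have hdiff := eq_zero_of_initial_eq_zero hk hm
    (X := fun t ↦ X t - (X 0 * cos (ω * t) + P 0 / (m * ω) * sin (ω * t)))
    (P := fun t ↦ P t - (-(m * ω * X 0) * sin (ω * t) + P 0 * cos (ω * t)))
    (fun t ↦ ((hX t).sub (hasDerivAt_cos_add_sin hω (X 0) (P 0) t).1).congr_deriv (by ring))
    (fun t ↦ ((hP t).sub (hasDerivAt_cos_add_sin hω (X 0) (P 0) t).2).congr_deriv (by ring))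
    (by simp) (by simp) t
  exact sub_eq_zero.1 hdiff

end HarmonicOscillator

/-- For the 1D Hamiltonian system with H(x,p) = x²/(2k) + p²/(2m),
integration time T = (π/2)√(km), and p₀ ∼ N(0,m) independent of x₀, the
conditional distribution of x(T) given x₀ equals N(0,k): the proposal samples
exactly from the target, independently of the starting point. -/
theorem stmt5 (k m x₀ : ℝ) (hk : 0 < k) (hm : 0 < m)
    (X P : ℝ → ℝ → ℝ)
    (hX : ∀ p₀ t, HasDerivAt (X p₀) (P p₀ t / m) t)
    (hP : ∀ p₀ t, HasDerivAt (P p₀) (-(X p₀ t) / k) t)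
    (hX0 : ∀ p₀, X p₀ 0 = x₀) (hP0 : ∀ p₀, P p₀ 0 = p₀) :
    Measure.map (fun p₀ => X p₀ (Real.pi / 2 * Real.sqrt (k * m)))
        (gaussianReal 0 m.toNNReal)
      = gaussianReal 0 k.toNNReal := by
  obtain ⟨ω, hω, hωT⟩ : ∃ ω, k * m * ω ^ 2 = 1 ∧ ω * (π / 2 * √(k * m)) = π / 2 := by
    have hkm : 0 < k * m := mul_pos hk hm
    refine ⟨(√(k * m))⁻¹, ?_, by field_simp⟩
    rw [inv_pow, sq_sqrt hkm.le, mul_inv_cancel₀ hkm.ne']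
  have hXT : (fun p₀ ↦ X p₀ (π / 2 * √(k * m))) = ((m * ω)⁻¹ * ·) := by
    ext p₀
    rw [HarmonicOscillator.eq_cos_add_sin hk hm hω (hX p₀) (hP p₀), hωT, hX0, hP0,
      cos_pi_div_two, sin_pi_div_two]
    ring
  rw [hXT, gaussianReal_map_const_mul, mul_zero]
  congr
  ext
  simp only [NNReal.coe_mul, NNReal.coe_mk, Real.coe_toNNReal _ hm.le, Real.coe_toNNReal _ hk.le]
  have hω0 : ω ≠ 0 := by rintro rfl; simp at hω
  field_simp
  linear_combination -hω
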